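/- Fix a real number a ≥ 1 and ε ∈ (0, 1/4], and let k = ⌊a/(4ε)⌋ ≥ 1. For every integer n ≥ k there exists an a-self-bounding function f: {0,1}^n → [0,1] such that every function p: {0,1}^n → ℝ with E[|f − p|] ≤ ε (expectation over the uniform distribution on {0,1}^n) has Fourier degree at least k. -/

import Mathlib

/-!
Take `S` a set of `k` coordinates, `c = min 1 (a / k)` and `f = 1 - c·[χ_S = -1]`. Flipping a
coordinate outside `S` does not change `f`, and a coordinate of `S` can lower `f` only where
`f = 1`, and then by `c`; so the self-bounding sum is at most `k c ≤ a`. The coefficient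
`f̂(S) = c/2` is at least `2ε` because `4εk ≤ a`, while `|f̂(S) - p̂(S)| ≤ E|f - p| ≤ ε`, so
`p̂(S) ≠ 0`.
-/

noncomputable section

/-- A function `f : {0,1}^n → ℝ` is `a`-self-bounding. -/
def SelfBounding (n : ℕ) (a : ℝ) (f : (Fin n → Bool) → ℝ) : Prop :=
  ∀ x : Fin n → Bool,
    (∀ i : Fin n,
      f x - min (f (Function.update x i false)) (f (Function.update x i true)) ≤ 1) ∧
    ∑ i : Fin n,
      (f x - min (f (Function.update x i false)) (f (Function.update x i true))) ≤ a * f x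

/-- Expectation with respect to the uniform distribution on `{0,1}^n`. -/
def expect (n : ℕ) (g : (Fin n → Bool) → ℝ) : ℝ :=
  (∑ x : Fin n → Bool, g x) / 2 ^ n

/-- The parity function `χ_S(x) = (-1)^{Σ_{i∈S} x_i}`. -/
def parity (n : ℕ) (S : Finset (Fin n)) (x : Fin n → Bool) : ℝ :=
  (-1 : ℝ) ^ (S.filter (fun i => x i = true)).card

/-- Fourier coefficient `p̂(S) = E[p ⬝ χ_S]`. -/
def fourierHat (n : ℕ) (p : (Fin n → Bool) → ℝ) (S : Finset (Fin n)) : ℝ :=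
  expect n (fun x => p x * parity n S x)

open Finset hiding expect

section Parity

variable {n : ℕ}

theorem parity_eq_prod (S : Finset (Fin n)) (x : Fin n → Bool) :
    parity n S x = ∏ i ∈ S, if x i = true then -1 else 1 := by
  rw [parity, ← prod_const, prod_filter]

theorem parity_eq_one_or_eq_neg_one (S : Finset (Fin n)) (x : Fin n → Bool) :
    parity n S x = 1 ∨ parity n S x = -1 :=
  neg_one_pow_eq_or ℝ _

theorem parity_mul_self (S : Finset (Fin n)) (x : Fin n → Bool) :
    parity n S x * parity n S x = 1 := by
  rcases parity_eq_one_or_eq_neg_one S x with h | h <;> rw [h] <;> norm_num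

theorem abs_parity (S : Finset (Fin n)) (x : Fin n → Bool) : |parity n S x| = 1 := by
  rcases parity_eq_one_or_eq_neg_one S x with h | h <;> rw [h] <;> norm_num

theorem parity_update_of_notMem {S : Finset (Fin n)} {i : Fin n} (hi : i ∉ S)
    (x : Fin n → Bool) (b : Bool) : parity n S (Function.update x i b) = parity n S x := by
  simp only [parity_eq_prod]
  refine prod_congr rfl fun j hj => ?_
  rw [Function.update_of_ne (ne_of_mem_of_not_mem hj hi)]

theorem parity_update_true {S : Finset (Fin n)} {i : Fin n} (hi : i ∈ S) (x : Fin n → Bool) :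
    parity n S (Function.update x i true) = -parity n S (Function.update x i false) := by
  have hrest : ∀ b, ∏ j ∈ S.erase i, (if Function.update x i b j = true then -1 else 1 : ℝ) =
      ∏ j ∈ S.erase i, if x j = true then -1 else 1 := fun b =>
    prod_congr rfl fun j hj => by rw [Function.update_of_ne (ne_of_mem_erase hj)]
  simp only [parity_eq_prod, ← mul_prod_erase S _ hi, hrest, Function.update_self]
  norm_num

theorem sum_parity_eq_zero {S : Finset (Fin n)} (hS : S.Nonempty) :
    ∑ x : Fin n → Bool, parity n S x = 0 := by
  obtain ⟨i, hi⟩ := hS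
  have hprod : ∀ x : Fin n → Bool, parity n S x =
      ∏ j, if j ∈ S then (if x j = true then -1 else 1) else 1 := fun x => by
    rw [parity_eq_prod, prod_ite_mem, univ_inter]
  -- the sum factorises over the coordinates, and the factor of a coordinate in `S` is `-1 + 1`
  rw [Fintype.sum_congr _ _ hprod, ← Fintype.prod_sum
    fun j (b : Bool) => if j ∈ S then (if b = true then (-1 : ℝ) else 1) else 1]
  exact prod_eq_zero (mem_univ i) (by simp [hi])

end Parity

section Fourier

variable {n : ℕ}

theorem fourierHat_sub (f g : (Fin n → Bool) → ℝ) (S : Finset (Fin n)) :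
    fourierHat n (fun x => f x - g x) S = fourierHat n f S - fourierHat n g S := by
  simp only [fourierHat, expect, sub_mul, sum_sub_distrib, sub_div]

theorem abs_fourierHat_le (f : (Fin n → Bool) → ℝ) (S : Finset (Fin n)) :
    |fourierHat n f S| ≤ expect n (fun x => |f x|) := by
  rw [fourierHat, expect, expect, abs_div, abs_of_pos (by positivity : (0 : ℝ) < 2 ^ n)]
  refine div_le_div_of_nonneg_right ?_ (by positivity)
  refine (abs_sum_le_sum_abs _ _).trans_eq (sum_congr rfl fun x _ => ?_)
  rw [abs_mul, abs_parity, mul_one]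

theorem fourierHat_ne_zero_of_expect_abs_sub_lt {f p : (Fin n → Bool) → ℝ}
    {S : Finset (Fin n)}
    (h : expect n (fun x => |f x - p x|) < |fourierHat n f S|) : fourierHat n p S ≠ 0 := by
  intro hp
  have := abs_fourierHat_le (fun x => f x - p x) S
  rw [fourierHat_sub, hp, sub_zero] at this
  linarith

end Fourier

def parityDip (n : ℕ) (S : Finset (Fin n)) (c : ℝ) (x : Fin n → Bool) : ℝ :=
  1 - c / 2 * (1 - parity n S x)

section ParityDip

variable {n : ℕ} {S : Finset (Fin n)} {c : ℝ}

theorem parityDip_eq_one_or_eq_one_sub (S : Finset (Fin n)) (c : ℝ) (x : Fin n → Bool) :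
    parityDip n S c x = 1 ∨ parityDip n S c x = 1 - c := by
  rcases parity_eq_one_or_eq_neg_one S x with h | h <;> simp only [parityDip, h] <;> norm_num

theorem parityDip_mem_Icc (hc₀ : 0 ≤ c) (hc₁ : c ≤ 1) (x : Fin n → Bool) :
    parityDip n S c x ∈ Set.Icc 0 1 := by
  rcases parityDip_eq_one_or_eq_one_sub S c x with h | h <;> rw [h] <;> constructor <;> linarith

theorem fourierHat_parityDip (hS : S.Nonempty) : fourierHat n (parityDip n S c) S = c / 2 := by
  have hpoint : ∀ x, parityDip n S c x * parity n S x = (1 - c / 2) * parity n S x + c / 2 :=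
    fun x => by simp only [parityDip]; linear_combination (c / 2) * parity_mul_self S x
  simp only [fourierHat, expect, hpoint, sum_add_distrib, ← mul_sum, sum_parity_eq_zero hS,
    sum_const, card_univ, Fintype.card_pi, Fintype.card_bool, prod_const, Fintype.card_fin]
  field_simp
  ring

theorem parityDip_sub_min_update (hc₀ : 0 ≤ c) (x : Fin n → Bool) (i : Fin n) :
    parityDip n S c x - min (parityDip n S c (Function.update x i false))
      (parityDip n S c (Function.update x i true)) =
      if i ∈ S then parityDip n S c x - (1 - c) else 0 := by
  split_ifs with hi
  · suffices min (parityDip n S c (Function.update x i false))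
        (parityDip n S c (Function.update x i true)) = 1 - c by rw [this]
    simp only [parityDip, parity_update_true hi]
    rcases parity_eq_one_or_eq_neg_one S (Function.update x i false) with h | h <;> rw [h]
    · rw [min_eq_right (by linarith)]; ring
    · rw [min_eq_left (by linarith)]; ring
  · simp only [parityDip, parity_update_of_notMem hi, min_self, sub_self]

theorem selfBounding_parityDip {a : ℝ} (hc₀ : 0 ≤ c) (hc₁ : c ≤ 1) (hca : #S * c ≤ a) :
    SelfBounding n a (parityDip n S c) := by
  intro x
  simp only [parityDip_sub_min_update hc₀, sum_ite_mem, univ_inter, sum_const, nsmul_eq_mul]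
  have ha : 0 ≤ a := le_trans (by positivity) hca
  rcases parityDip_eq_one_or_eq_one_sub S c x with h | h <;> rw [h]
  · refine ⟨fun i => ?_, by simpa using hca⟩
    split_ifs <;> linarith
  · refine ⟨fun i => ?_, ?_⟩
    · split_ifs <;> linarith
    rw [sub_self, mul_zero]
    exact mul_nonneg ha (by linarith)

end ParityDip

theorem selfbounding_degree_lower_bound (a ε : ℝ) (ha : 1 ≤ a) (hε : 0 < ε)
    (hε4 : ε ≤ 1 / 4) (n : ℕ) (hn : ⌊a / (4 * ε)⌋₊ ≤ n) :
    1 ≤ ⌊a / (4 * ε)⌋₊ ∧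
      ∃ f : (Fin n → Bool) → ℝ,
        SelfBounding n a f ∧ (∀ x, f x ∈ Set.Icc (0 : ℝ) 1) ∧
        ∀ p : (Fin n → Bool) → ℝ, expect n (fun x => |f x - p x|) ≤ ε →
          ∃ S : Finset (Fin n), ⌊a / (4 * ε)⌋₊ ≤ S.card ∧ fourierHat n p S ≠ 0 := by
  set k := ⌊a / (4 * ε)⌋₊
  have hk : 1 ≤ k := Nat.le_floor <| by
    rw [Nat.cast_one, le_div_iff₀ (by positivity)]
    linarith
  have hk₀ : (0 : ℝ) < k := by exact_mod_cast hk
  have hεk : 4 * ε * k ≤ a := by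
    have := Nat.floor_le (a := a / (4 * ε)) (by positivity)
    rwa [le_div_iff₀ (by positivity), mul_comm] at this
  obtain ⟨S, -, hS⟩ := exists_subset_card_eq (s := (univ : Finset (Fin n))) (by simpa using hn)
  set c := min 1 (a / k)
  have hεc : 4 * ε ≤ c := le_min (by linarith) (by rwa [le_div_iff₀ hk₀])
  have hc₁ : c ≤ 1 := min_le_left _ _
  have hca : #S * c ≤ a := by
    rw [hS, ← le_div_iff₀' hk₀]
    exact min_le_right _ _
  refine ⟨hk, parityDip n S c, selfBounding_parityDip (by linarith) hc₁ hca,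
    parityDip_mem_Icc (by linarith) hc₁, fun p hp => ⟨S, hS.ge, ?_⟩⟩
  have hS₀ : S.Nonempty := card_pos.mp (by omega)
  have hcoef : |fourierHat n (parityDip n S c) S| = c / 2 := by
    rw [fourierHat_parityDip hS₀, abs_of_pos (by linarith)]
  exact fourierHat_ne_zero_of_expect_abs_sub_lt (by linarith)
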